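/- arXiv:1901.09847 — 6 statements merged into one kernel-verified Lean document; each statement's English description precedes it below -/
import Mathlib

section
/- For the constrained problem min_{x∈[-1,1]} f(x) = x/4 with stochastic gradient g = 4 with probability 1/4 and g = -1 with probability 3/4 (so E[g] = 1/4 = f'(x)), for any step-size γ ≥ 0 the signSGD update x_{t+1} = x_t - γ·sign(g) satisfies E[f(x_{t+1})] = f(x_t) + γ/8, i.e., the objective increases in expectation. -/
theorem signSGD_counterexample_one_dim_general
    (f : ℝ → ℝ) (hf : ∀ x, f x = x / 4)
    (γ : ℝ) (x : ℝ) :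
    (1/4 : ℝ) * f (x - γ * Real.sign 4) + (3/4 : ℝ) * f (x - γ * Real.sign (-1))
      = f x + γ / 8 := by
  rw [hf, hf, hf, Real.sign_of_pos four_pos, Real.sign_of_neg neg_one_lt_zero]
  ring

/-- signSGD on `f x = x/4` with stochastic gradient `g = 4` w.p. `1/4` and
`g = -1` w.p. `3/4`: for any step-size `γ ≥ 0`, the expected objective after one
signSGD step `x - γ·sign(g)` equals `f x + γ/8`, i.e. increases in expectation. -/
theorem signSGD_counterexample_one_dim
    (f : ℝ → ℝ) (hf : ∀ x, f x = x / 4)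
    (γ : ℝ) (hγ : 0 ≤ γ) (x : ℝ) (hx : x ∈ Set.Icc (-1 : ℝ) 1) :
    (1/4 : ℝ) * f (x - γ * Real.sign 4) + (3/4 : ℝ) * f (x - γ * Real.sign (-1))
      = f x + γ / 8 :=
  signSGD_counterexample_one_dim_general f hf γ x
end

section
/- Consider the least-squares problem f(x) = ⟨a₁,x⟩² + ⟨a₂,x⟩² on ℝ² where a₁ = (1,-1) + ε(1,1) and a₂ = -(1,-1) + ε(1,1) for 0 < ε < 1. The stochastic gradient (chosen as the gradient of one of the two terms) is always a scalar multiple of a₁ or a₂. For iterates with x₁+x₂ > 0, the coordinate-wise sign of any such nonzero stochastic gradient equals ±(1,-1), so signSGD started at x₀ = (1,1) keeps x₁+x₂ = 2 constant and f(xₜ) ≥ f(x₀) almost surely for any step-size sequence. -/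
/-!
Each data point `aᵢ = ±(1,-1) + ε(1,1)` with `|ε| < 1` has coordinatewise sign `±(1,-1)`, and so
does every nonzero multiple of it. A signSGD step therefore moves along `(1,-1)` and preserves
`x₀ + x₁ = 2`. On that line `f x = 2 (x₀ - x₁)² + 8 ε²`, which is minimised at the starting point
`(1,1)`, so no iterate improves on it.
-/

open Finset

theorem Real.sign_mul (r s : ℝ) : Real.sign (r * s) = Real.sign r * Real.sign s := by
  rcases lt_trichotomy r 0 with hr | hr | hr <;> rcases lt_trichotomy s 0 with hs | hs | hs <;>
    simp [Real.sign_of_neg, Real.sign_of_pos, hr, hs, mul_pos_of_neg_of_neg,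
      mul_neg_of_neg_of_pos, mul_neg_of_pos_of_neg]

theorem Real.sign_comp_smul {ι : Type*} (c : ℝ) (v : ι → ℝ) :
    (fun i => Real.sign ((c • v) i)) = Real.sign c • fun i => Real.sign (v i) := by
  ext i
  simp [Real.sign_mul]

theorem sign_comp_vecCons_two (p q : ℝ) :
    (fun i => Real.sign (![p, q] i)) = ![Real.sign p, Real.sign q] := by
  ext i
  fin_cases i <;> rfl

theorem sign_comp_smul_eq_or_eq_neg {ι : Type*} {c : ℝ} (hc : c ≠ 0) {v s : ι → ℝ}
    (hv : (fun i => Real.sign (v i)) = s ∨ (fun i => Real.sign (v i)) = -s) :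
    (fun i => Real.sign ((c • v) i)) = s ∨ (fun i => Real.sign ((c • v) i)) = -s := by
  rw [Real.sign_comp_smul]
  rcases Real.sign_apply_eq_of_ne_zero c hc with hc' | hc' <;> rcases hv with hv | hv <;>
    simp [hc', hv]

theorem sign_comp_shifted_antidiagonal {ε : ℝ} (hε : -1 < ε) (hε1 : ε < 1) :
    (fun i => Real.sign (![1 + ε, -1 + ε] i)) = ![1, -1] ∧
      (fun i => Real.sign (![-1 + ε, 1 + ε] i)) = -![1, -1] := by
  have hpos : Real.sign (1 + ε) = 1 := Real.sign_of_pos (by linarith)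
  have hneg : Real.sign (-1 + ε) = -1 := Real.sign_of_neg (by linarith)
  simp [sign_comp_vecCons_two, hpos, hneg]

theorem sum_signSGD_iterate_eq {ι : Type*} [Fintype ι] (γ : ℕ → ℝ) (g x : ℕ → ι → ℝ)
    (hstep : ∀ t i, x (t + 1) i = x t i - γ t * Real.sign (g t i))
    (hbalanced : ∀ t, ∑ i, Real.sign (g t i) = 0) (t : ℕ) :
    ∑ i, x t i = ∑ i, x 0 i := by
  induction t with
  | zero => rfl
  | succ t ih =>
    simp only [hstep, sum_sub_distrib, ← mul_sum, hbalanced, mul_zero, sub_zero, ih]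

/-- SignSGD counterexample on the smooth least-squares problem
`f x = ⟨a₁,x⟩² + ⟨a₂,x⟩²` with `a₁ = (1,-1) + ε(1,1)`, `a₂ = -(1,-1) + ε(1,1)`,
`0 < ε < 1`. Stochastic gradients are scalar multiples `c t • a_{i t}` of the
data points. Any such nonzero stochastic gradient has coordinatewise sign
`±(1,-1)`, so signSGD started at `x₀ = (1,1)` keeps `x₁ + x₂ = 2` constant and
`f (x t) ≥ f (x 0)` for any step-size sequence. -/
theorem signSGD_smooth_counterexample
    (ε : ℝ) (hε : 0 < ε) (hε1 : ε < 1)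
    (a : Fin 2 → Fin 2 → ℝ)
    (ha0 : a 0 = ![1 + ε, -1 + ε]) (ha1 : a 1 = ![-1 + ε, 1 + ε])
    (f : (Fin 2 → ℝ) → ℝ)
    (hf : ∀ x, f x = (a 0 0 * x 0 + a 0 1 * x 1) ^ 2
        + (a 1 0 * x 0 + a 1 1 * x 1) ^ 2)
    (γ : ℕ → ℝ) (c : ℕ → ℝ) (idx : ℕ → Fin 2)
    (hc : ∀ t, c t ≠ 0)
    (g : ℕ → Fin 2 → ℝ) (hg : ∀ t, g t = c t • a (idx t))
    (x : ℕ → Fin 2 → ℝ) (hx0 : x 0 = ![1, 1])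
    (hstep : ∀ t i, x (t + 1) i = x t i - γ t * Real.sign (g t i)) :
    (∀ t, (fun i => Real.sign (g t i)) = ![1, -1] ∨
          (fun i => Real.sign (g t i)) = ![-1, 1]) ∧
    (∀ t, x t 0 + x t 1 = 2) ∧
    (∀ t, f (x t) ≥ f (x 0)) := by
  have hsign : ∀ t, (fun i => Real.sign (g t i)) = ![1, -1] ∨
      (fun i => Real.sign (g t i)) = -![1, -1] := by
    obtain ⟨hsign0, hsign1⟩ := sign_comp_shifted_antidiagonal (by linarith : -1 < ε) hε1
    intro t
    rw [hg]
    refine sign_comp_smul_eq_or_eq_neg (hc t) ?_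
    generalize idx t = j
    fin_cases j <;> simp [ha0, ha1, hsign0, hsign1]
  have hbalanced : ∀ t, ∑ i, Real.sign (g t i) = 0 := by
    intro t
    rcases hsign t with h | h <;> simp [Fin.sum_univ_two, congrFun h 0, congrFun h 1]
  have hsum : ∀ t, x t 0 + x t 1 = 2 := by
    intro t
    simpa [Fin.sum_univ_two, hx0, one_add_one_eq_two] using
      sum_signSGD_iterate_eq γ g x hstep hbalanced t
  have hf_eq : ∀ y, f y = 2 * (y 0 - y 1) ^ 2 + 2 * ε ^ 2 * (y 0 + y 1) ^ 2 := by
    intro y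
    simp only [hf, ha0, ha1, Matrix.cons_val_zero, Matrix.cons_val_one]
    ring
  refine ⟨fun t => by simpa using hsign t, hsum, fun t => ?_⟩
  rw [hf_eq, hf_eq, hsum, hsum, hx0]
  simp only [Matrix.cons_val_zero, Matrix.cons_val_one, sub_self]
  nlinarith [sq_nonneg (x t 0 - x t 1)]
end

section
/- Let C: ℝᵈ → ℝᵈ be a δ-approximate compressor, i.e., ‖C(x) - x‖² ≤ (1-δ)‖x‖² for all x, with δ ∈ (0,1]. Consider the error-feedback recursion e_{t+1} = p_t - C(p_t) where p_t = γg_t + e_t, e_0 = 0, and E‖g_t‖² ≤ σ² for all t. Then for all t ≥ 0, E‖e_t‖² ≤ 4(1-δ)γ²σ²/δ². -/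
open MeasureTheory

/-- Lemma 3 (error is bounded): for a `δ`-approximate compressor `C`
(`‖C x - x‖² ≤ (1-δ)‖x‖²`, `δ ∈ (0,1]`) and the error-feedback recursion
`e₀ = 0`, `p t = γ • g t + e t`, `e (t+1) = p t - C (p t)` with
`E‖g t‖² ≤ σ²`, the error satisfies `E‖e t‖² ≤ 4(1-δ)γ²σ²/δ²` for all `t`. -/
theorem error_feedback_error_is_bounded
    {d : ℕ} {Ω : Type*} [MeasurableSpace Ω] (μ : Measure Ω)
    [IsProbabilityMeasure μ]
    (δ : ℝ) (hδ0 : 0 < δ) (hδ1 : δ ≤ 1)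
    (C : EuclideanSpace ℝ (Fin d) → EuclideanSpace ℝ (Fin d))
    (hC : ∀ v, ‖C v - v‖ ^ 2 ≤ (1 - δ) * ‖v‖ ^ 2)
    (γ σ : ℝ) (hγ : 0 ≤ γ) (hσ : 0 ≤ σ)
    (g e p : ℕ → Ω → EuclideanSpace ℝ (Fin d))
    (hgint : ∀ t, Integrable (fun ω => ‖g t ω‖ ^ 2) μ)
    (heint : ∀ t, Integrable (fun ω => ‖e t ω‖ ^ 2) μ)
    (hgvar : ∀ t, ∫ ω, ‖g t ω‖ ^ 2 ∂μ ≤ σ ^ 2)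
    (he0 : ∀ ω, e 0 ω = 0)
    (hp : ∀ t ω, p t ω = γ • g t ω + e t ω)
    (he : ∀ t ω, e (t + 1) ω = p t ω - C (p t ω)) :
    ∀ t, ∫ ω, ‖e t ω‖ ^ 2 ∂μ ≤ 4 * (1 - δ) * γ ^ 2 * σ ^ 2 / δ ^ 2 := by
  have hδ' : (0:ℝ) ≤ 1 - δ := by linarith
  have h2δ : (0:ℝ) < 2 - δ := by linarith
  have hXnn : ∀ t, 0 ≤ ∫ ω, ‖e t ω‖ ^ 2 ∂μ := fun t =>
    integral_nonneg fun ω => sq_nonneg _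
  have hYnn : ∀ t, 0 ≤ ∫ ω, ‖g t ω‖ ^ 2 ∂μ := fun t =>
    integral_nonneg fun ω => sq_nonneg _
  intro t
  induction t with
  | zero =>
      have : (fun ω => ‖e 0 ω‖ ^ 2) = fun _ => (0:ℝ) := by
        funext ω; rw [he0 ω]; simp
      rw [this]
      simp only [integral_zero]
      positivity
  | succ t ih =>
      set X := ∫ ω, ‖e t ω‖ ^ 2 ∂μ with hX
      set Y := ∫ ω, ‖g t ω‖ ^ 2 ∂μ with hY
      set I := ∫ ω, ‖e (t+1) ω‖ ^ 2 ∂μ with hI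
      -- pointwise inequality
      have hpt : ∀ ω, δ * (2 - δ) * ‖e (t+1) ω‖ ^ 2 ≤
          (1 - δ) * 2 * δ * ‖e t ω‖ ^ 2 + (1 - δ) * 2 * (2 - δ) * γ ^ 2 * ‖g t ω‖ ^ 2 := by
        intro ω
        have h1 : ‖e (t+1) ω‖ ^ 2 ≤ (1 - δ) * ‖p t ω‖ ^ 2 := by
          rw [he t ω, norm_sub_rev]
          exact hC (p t ω)
        have h2 : ‖p t ω‖ ≤ γ * ‖g t ω‖ + ‖e t ω‖ := by
          rw [hp t ω]
          calc ‖γ • g t ω + e t ω‖ ≤ ‖γ • g t ω‖ + ‖e t ω‖ := norm_add_le _ _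
            _ = γ * ‖g t ω‖ + ‖e t ω‖ := by rw [norm_smul, Real.norm_eq_abs, abs_of_nonneg hγ]
        have h3 : ‖p t ω‖ ^ 2 ≤ (γ * ‖g t ω‖ + ‖e t ω‖) ^ 2 := by
          apply sq_le_sq' _ h2
          have := norm_nonneg (p t ω)
          nlinarith [norm_nonneg (g t ω), norm_nonneg (e t ω), mul_nonneg hγ (norm_nonneg (g t ω))]
        nlinarith [mul_nonneg hδ' (sq_nonneg (δ * ‖e t ω‖ - (2 - δ) * (γ * ‖g t ω‖))),
          mul_le_mul_of_nonneg_left h3 (by positivity : (0:ℝ) ≤ (1 - δ) * δ * (2 - δ)),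
          mul_le_mul_of_nonneg_left h1 (mul_nonneg hδ0.le h2δ.le)]
      -- integrate
      have hintL : Integrable (fun ω => δ * (2 - δ) * ‖e (t+1) ω‖ ^ 2) μ :=
        (heint (t+1)).const_mul _
      have hintR1 : Integrable (fun ω => (1 - δ) * 2 * δ * ‖e t ω‖ ^ 2) μ :=
        (heint t).const_mul _
      have hintR2 : Integrable (fun ω => (1 - δ) * 2 * (2 - δ) * γ ^ 2 * ‖g t ω‖ ^ 2) μ :=
        (hgint t).const_mul _
      have hmono : ∫ ω, δ * (2 - δ) * ‖e (t+1) ω‖ ^ 2 ∂μ ≤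
          ∫ ω, ((1 - δ) * 2 * δ * ‖e t ω‖ ^ 2 + (1 - δ) * 2 * (2 - δ) * γ ^ 2 * ‖g t ω‖ ^ 2) ∂μ :=
        integral_mono hintL (hintR1.add hintR2) hpt
      rw [integral_add hintR1 hintR2] at hmono
      simp only [integral_const_mul] at hmono
      have h1 : δ * (2 - δ) * I ≤ (1 - δ) * 2 * δ * X + (1 - δ) * 2 * (2 - δ) * γ ^ 2 * Y :=
        hmono
      have hIH' : X * δ ^ 2 ≤ 4 * (1 - δ) * γ ^ 2 * σ ^ 2 := by
        rw [← le_div_iff₀ (by positivity : (0:ℝ) < δ ^ 2)]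
        exact ih
      have hYσ : Y ≤ σ ^ 2 := hgvar t
      rw [le_div_iff₀ (by positivity : (0:ℝ) < δ ^ 2)]
      nlinarith [mul_le_mul_of_nonneg_left h1 hδ0.le,
        mul_le_mul_of_nonneg_left hIH' hδ',
        mul_le_mul_of_nonneg_left hYσ (by positivity : (0:ℝ) ≤ (1 - δ) * 2 * δ * (2 - δ) * γ ^ 2),
        hXnn t, hYnn t, hXnn (t+1), sq_nonneg δ, mul_nonneg hδ' (sq_nonneg (γ * σ))]
end

section
/- Let f: ℝᵈ → ℝ be convex with minimizer x*, let C be a δ-approximate compressor, and assume stochastic gradients satisfy E[g_t | x_t] ∈ ∂f(x_t) (a subgradient in expectation) with E‖g_t‖² ≤ σ² and ‖∂f(x_t)‖ ≤ σ. Then the averaged iterate x̄_T = (1/(T+1))Σ_{t=0}^T x_t of EC-SGD with step-size γ > 0 satisfies E[f(x̄_T)] - f(x*) ≤ ‖x₀-x*‖²/(2γ(T+1)) + γσ²(1/2 + 2√(1-δ)/δ). -/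
/-!
The virtual iterate `x̃ t = x t - e t` follows plain SGD: `x̃ (t+1) = x̃ t - γ • g t`.
Expanding its squared distance to `x⋆`, replacing `g t` by `h (x t)` in `E⟪g t, x t - x⋆⟫`
(the factor `x t - x⋆` is measurable for the σ-algebra generated by `x t`) and applying the
subgradient inequality gives
`2γ (E f(x t) - f x⋆) ≤ E‖x̃ t - x⋆‖² - E‖x̃ (t+1) - x⋆‖² + γ² E‖g t‖² + 2γ E⟪g t, e t⟫`.
In `L²` the compressor gives `‖e (t+1)‖ ≤ √(1-δ) (γσ + ‖e t‖)`, whose solutions stay below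
`2√(1-δ) γσ / δ` since `√(1-δ) ≤ 1 - δ/2`; Cauchy–Schwarz then bounds the cross term.
Telescoping and Jensen's inequality for the average finish the proof.
-/

open MeasureTheory

namespace MeasureTheory

theorem MemLp.integrable_norm_sq {Ω E : Type*} [MeasurableSpace Ω] {μ : Measure Ω}
    [NormedAddCommGroup E] {u : Ω → E} (hu : MemLp u 2 μ) :
    Integrable (fun ω => ‖u ω‖ ^ 2) μ :=
  (memLp_two_iff_integrable_sq_norm hu.1).1 hu

section L2

variable {Ω E : Type*} [MeasurableSpace Ω] {μ : Measure Ω}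
  [NormedAddCommGroup E] [InnerProductSpace ℝ E] {u v : Ω → E}

theorem MemLp.integral_inner_eq_inner_toLp (hu : MemLp u 2 μ) (hv : MemLp v 2 μ) :
    ∫ ω, inner ℝ (u ω) (v ω) ∂μ = inner ℝ (hu.toLp u) (hv.toLp v) := by
  rw [L2.inner_def]
  refine integral_congr_ae ?_
  filter_upwards [hu.coeFn_toLp, hv.coeFn_toLp] with ω hu' hv'
  rw [hu', hv']

theorem MemLp.integral_norm_sq_eq_norm_toLp_sq (hu : MemLp u 2 μ) :
    ∫ ω, ‖u ω‖ ^ 2 ∂μ = ‖hu.toLp u‖ ^ 2 := by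
  simp_rw [← real_inner_self_eq_norm_sq]
  exact hu.integral_inner_eq_inner_toLp hu

theorem MemLp.sqrt_integral_norm_sq_eq_norm_toLp (hu : MemLp u 2 μ) :
    √(∫ ω, ‖u ω‖ ^ 2 ∂μ) = ‖hu.toLp u‖ := by
  rw [hu.integral_norm_sq_eq_norm_toLp_sq, Real.sqrt_sq (norm_nonneg _)]

theorem integral_inner_le_sqrt_mul_sqrt (hu : MemLp u 2 μ) (hv : MemLp v 2 μ) :
    ∫ ω, inner ℝ (u ω) (v ω) ∂μ ≤ √(∫ ω, ‖u ω‖ ^ 2 ∂μ) * √(∫ ω, ‖v ω‖ ^ 2 ∂μ) := by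
  rw [hu.integral_inner_eq_inner_toLp hv, hu.sqrt_integral_norm_sq_eq_norm_toLp,
    hv.sqrt_integral_norm_sq_eq_norm_toLp]
  exact real_inner_le_norm _ _

theorem sqrt_integral_norm_add_sq_le (hu : MemLp u 2 μ) (hv : MemLp v 2 μ) :
    √(∫ ω, ‖u ω + v ω‖ ^ 2 ∂μ) ≤ √(∫ ω, ‖u ω‖ ^ 2 ∂μ) + √(∫ ω, ‖v ω‖ ^ 2 ∂μ) := by
  calc √(∫ ω, ‖u ω + v ω‖ ^ 2 ∂μ) = ‖hu.toLp u + hv.toLp v‖ := by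
        rw [← MemLp.toLp_add]; exact (hu.add hv).sqrt_integral_norm_sq_eq_norm_toLp
    _ ≤ _ := by
        rw [hu.sqrt_integral_norm_sq_eq_norm_toLp, hv.sqrt_integral_norm_sq_eq_norm_toLp]
        exact norm_add_le _ _

theorem integral_norm_sub_smul_sq (hu : MemLp u 2 μ) (hv : MemLp v 2 μ) (γ : ℝ) :
    ∫ ω, ‖u ω - γ • v ω‖ ^ 2 ∂μ
      = ∫ ω, ‖u ω‖ ^ 2 ∂μ - 2 * γ * ∫ ω, inner ℝ (v ω) (u ω) ∂μ
        + γ ^ 2 * ∫ ω, ‖v ω‖ ^ 2 ∂μ := by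
  calc ∫ ω, ‖u ω - γ • v ω‖ ^ 2 ∂μ = ‖hu.toLp u - γ • hv.toLp v‖ ^ 2 := by
        rw [← MemLp.toLp_const_smul, ← MemLp.toLp_sub]
        exact (hu.sub (hv.const_smul γ)).integral_norm_sq_eq_norm_toLp_sq
    _ = _ := by
        rw [hu.integral_norm_sq_eq_norm_toLp_sq, hv.integral_norm_sq_eq_norm_toLp_sq,
          hv.integral_inner_eq_inner_toLp hu, norm_sub_sq_real, inner_smul_right,
          real_inner_comm, norm_smul, mul_pow, Real.norm_eq_abs, sq_abs]
        ring

theorem sqrt_integral_norm_smul_sq (γ : ℝ) (u : Ω → E) :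
    √(∫ ω, ‖γ • u ω‖ ^ 2 ∂μ) = |γ| * √(∫ ω, ‖u ω‖ ^ 2 ∂μ) := by
  simp_rw [norm_smul, mul_pow, Real.norm_eq_abs, sq_abs]
  rw [integral_const_mul, Real.sqrt_mul (sq_nonneg _), Real.sqrt_sq_eq_abs]

theorem MemLp.integrable_inner (hu : MemLp u 2 μ) (hv : MemLp v 2 μ) :
    Integrable (fun ω => inner ℝ (u ω) (v ω)) μ := by
  refine (L2.integrable_inner (𝕜 := ℝ) (hu.toLp u) (hv.toLp v)).congr ?_
  filter_upwards [hu.coeFn_toLp, hv.coeFn_toLp] with ω hu' hv'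
  rw [hu', hv']

end L2

section CondExp

variable {Ω E : Type*} {m m0 : MeasurableSpace Ω} {μ : Measure Ω}
  [NormedAddCommGroup E] [InnerProductSpace ℝ E] [CompleteSpace E] {G H Y : Ω → E}

theorem condExp_inner_of_stronglyMeasurable_right (hY : StronglyMeasurable[m] Y)
    (hGY : Integrable (fun ω => inner ℝ (G ω) (Y ω)) μ) (hG : Integrable G μ) :
    μ[fun ω => inner ℝ (G ω) (Y ω) | m] =ᵐ[μ] fun ω => inner ℝ (μ[G | m] ω) (Y ω) :=
  condExp_bilin_of_stronglyMeasurable_right (innerSL ℝ) hY hGY hG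

theorem integrable_inner_of_condExp_ae_eq (hGH : μ[G | m] =ᵐ[μ] H)
    (hY : StronglyMeasurable[m] Y) (hGY : Integrable (fun ω => inner ℝ (G ω) (Y ω)) μ)
    (hG : Integrable G μ) :
    Integrable (fun ω => inner ℝ (H ω) (Y ω)) μ := by
  refine (integrable_condExp (m := m) (f := fun ω => inner ℝ (G ω) (Y ω))).congr ?_
  filter_upwards [condExp_inner_of_stronglyMeasurable_right hY hGY hG, hGH] with ω hpull hω
  rw [hpull, hω]

theorem integral_inner_of_condExp_ae_eq (hm : m ≤ m0) [SigmaFinite (μ.trim hm)]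
    (hGH : μ[G | m] =ᵐ[μ] H)
    (hY : StronglyMeasurable[m] Y) (hGY : Integrable (fun ω => inner ℝ (G ω) (Y ω)) μ)
    (hG : Integrable G μ) :
    ∫ ω, inner ℝ (H ω) (Y ω) ∂μ = ∫ ω, inner ℝ (G ω) (Y ω) ∂μ := by
  calc ∫ ω, inner ℝ (H ω) (Y ω) ∂μ = ∫ ω, μ[fun ω => inner ℝ (G ω) (Y ω) | m] ω ∂μ := by
        refine integral_congr_ae ?_
        filter_upwards [condExp_inner_of_stronglyMeasurable_right hY hGY hG, hGH] with ω hpull hω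
        rw [hpull, hω]
    _ = _ := integral_condExp hm

end CondExp

section Subgradient

variable {Ω E : Type*} [MeasurableSpace Ω] {μ : Measure Ω}
  [NormedAddCommGroup E] [InnerProductSpace ℝ E] {f : E → ℝ} {h : E → E} {X : Ω → E}

theorem sub_le_inner_of_subgradient (hsub : ∀ x y, f y ≥ f x + inner ℝ (h x) (y - x)) (x c : E) :
    f x - f c ≤ inner ℝ (h x) (x - c) := by
  have h_at := hsub x c
  rw [← neg_sub x c, inner_neg_right] at h_at
  linarith

theorem integrable_comp_of_subgradient_of_le [IsFiniteMeasure μ]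
    (hsub : ∀ x y, f y ≥ f x + inner ℝ (h x) (y - x)) (c : E)
    (hfX : AEStronglyMeasurable (fun ω => f (X ω)) μ) (hX : Integrable X μ)
    {U : Ω → ℝ} (hle : ∀ ω, f (X ω) ≤ U ω) (hU : Integrable U μ) :
    Integrable (fun ω => f (X ω)) μ :=
  integrable_of_le_of_le hfX (ae_of_all _ fun ω => hsub c (X ω)) (ae_of_all _ hle)
    ((integrable_const _).add ((hX.sub (integrable_const c)).const_inner (h c))) hU

theorem integral_comp_sub_le_integral_inner [IsProbabilityMeasure μ]
    (hsub : ∀ x y, f y ≥ f x + inner ℝ (h x) (y - x)) (c : E)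
    (hfX : Integrable (fun ω => f (X ω)) μ)
    (hhX : Integrable (fun ω => inner ℝ (h (X ω)) (X ω - c)) μ) :
    ∫ ω, f (X ω) ∂μ - f c ≤ ∫ ω, inner ℝ (h (X ω)) (X ω - c) ∂μ := by
  calc ∫ ω, f (X ω) ∂μ - f c = ∫ ω, (f (X ω) - f c) ∂μ := by
        rw [integral_sub hfX (integrable_const _), integral_const]
        simp
    _ ≤ _ := by
        exact integral_mono (hfX.sub (integrable_const _)) hhX fun ω =>
          sub_le_inner_of_subgradient hsub (X ω) c

end Subgradient

section Jensen

variable {ι Ω E : Type*} [MeasurableSpace Ω] {μ : Measure Ω}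
  [NormedAddCommGroup E] [NormedSpace ℝ E] {f : E → ℝ} {s : Finset ι}

theorem _root_.ConvexOn.map_uniform_average_le (hf : ConvexOn ℝ Set.univ f) (hs : s.Nonempty)
    (v : ι → E) :
    f ((1 / (s.card : ℝ)) • ∑ i ∈ s, v i) ≤ 1 / (s.card : ℝ) * ∑ i ∈ s, f (v i) := by
  have hw : ∑ _i ∈ s, 1 / (s.card : ℝ) = 1 := by
    rw [Finset.sum_const, nsmul_eq_mul]
    field_simp [hs.card_pos.ne']
  simpa [Finset.smul_sum, Finset.mul_sum] using
    hf.map_sum_le (fun _ _ => by positivity) hw (fun _ _ => Set.mem_univ _)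

theorem _root_.ConvexOn.integral_comp_uniform_average_le (hf : ConvexOn ℝ Set.univ f)
    (hs : s.Nonempty) {X : ι → Ω → E} (hfX : ∀ i ∈ s, Integrable (fun ω => f (X i ω)) μ)
    (hfavg : Integrable (fun ω => f ((1 / (s.card : ℝ)) • ∑ i ∈ s, X i ω)) μ) :
    ∫ ω, f ((1 / (s.card : ℝ)) • ∑ i ∈ s, X i ω) ∂μ
      ≤ 1 / (s.card : ℝ) * ∑ i ∈ s, ∫ ω, f (X i ω) ∂μ := by
  rw [← integral_finsetSum s hfX, ← integral_const_mul]
  exact integral_mono hfavg ((integrable_finsetSum s hfX).const_mul _)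
    fun ω => hf.map_uniform_average_le hs fun i => X i ω

theorem _root_.ConvexOn.integrable_comp_uniform_average {E : Type*} [NormedAddCommGroup E]
    [InnerProductSpace ℝ E] [IsFiniteMeasure μ] {f : E → ℝ} {h : E → E}
    (hf : ConvexOn ℝ Set.univ f) (hfc : Continuous f)
    (hsub : ∀ x y, f y ≥ f x + inner ℝ (h x) (y - x)) (c : E) (hs : s.Nonempty)
    {X : ι → Ω → E} (hX : ∀ i ∈ s, Integrable (X i) μ)
    (hfX : ∀ i ∈ s, Integrable (fun ω => f (X i ω)) μ) :
    Integrable (fun ω => f ((1 / (s.card : ℝ)) • ∑ i ∈ s, X i ω)) μ := by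
  have havg : Integrable (fun ω => (1 / (s.card : ℝ)) • ∑ i ∈ s, X i ω) μ :=
    (integrable_finsetSum s hX).smul _
  exact integrable_comp_of_subgradient_of_le hsub c
    (hfc.comp_aestronglyMeasurable havg.aestronglyMeasurable) havg
    (fun ω => hf.map_uniform_average_le hs fun i => X i ω)
    ((integrable_finsetSum s hfX).const_mul _)

end Jensen

theorem average_sub_le_of_two_mul_sub_le {F R : ℕ → ℝ} {a K γ : ℝ} (hγ : 0 < γ) (n : ℕ)
    (hR : 0 ≤ R (n + 1)) (hstep : ∀ t, 2 * γ * (F t - a) ≤ R t - R (t + 1) + K) :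
    1 / ((n : ℝ) + 1) * ∑ t ∈ Finset.range (n + 1), F t - a
      ≤ R 0 / (2 * γ * (n + 1)) + K / (2 * γ) := by
  have hsum : 2 * γ * (∑ t ∈ Finset.range (n + 1), F t - (n + 1) * a)
      ≤ R 0 - R (n + 1) + (n + 1) * K := by
    have := Finset.sum_le_sum fun t (_ : t ∈ Finset.range (n + 1)) => hstep t
    rw [Finset.sum_add_distrib, Finset.sum_range_sub', ← Finset.mul_sum,
      Finset.sum_sub_distrib] at this
    simpa using this
  rw [div_add_div _ _ (by positivity) (by positivity), le_div_iff₀ (by positivity)]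
  field_simp
  linarith

theorem stronglyMeasurable_comap_sub_const {Ω E : Type*} [NormedAddCommGroup E]
    [MeasurableSpace E] [BorelSpace E] [SecondCountableTopology E] (X : Ω → E) (c : E) :
    StronglyMeasurable[MeasurableSpace.comap X inferInstance] fun ω => X ω - c :=
  ((comap_measurable X).sub_const c).stronglyMeasurable

section Descent

variable {Ω E : Type*} [MeasurableSpace Ω] {μ : Measure Ω}
  [NormedAddCommGroup E] [InnerProductSpace ℝ E] [CompleteSpace E]
  [MeasurableSpace E] [BorelSpace E] [SecondCountableTopology E]
  {f : E → ℝ} {h : E → E} {X G : Ω → E}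

theorem integrable_inner_sub_of_condExp_comap [IsFiniteMeasure μ] (c : E)
    (hX : MemLp X 2 μ) (hG : MemLp G 2 μ)
    (hGX : μ[G | MeasurableSpace.comap X inferInstance] =ᵐ[μ] fun ω => h (X ω)) :
    Integrable (fun ω => inner ℝ (h (X ω)) (X ω - c)) μ :=
  integrable_inner_of_condExp_ae_eq hGX (stronglyMeasurable_comap_sub_const X c)
    (hG.integrable_inner (hX.sub (memLp_const c))) (hG.integrable one_le_two)

theorem integral_inner_sub_of_condExp_comap [IsFiniteMeasure μ] (c : E) (hXm : Measurable X)
    (hX : MemLp X 2 μ) (hG : MemLp G 2 μ)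
    (hGX : μ[G | MeasurableSpace.comap X inferInstance] =ᵐ[μ] fun ω => h (X ω)) :
    ∫ ω, inner ℝ (h (X ω)) (X ω - c) ∂μ = ∫ ω, inner ℝ (G ω) (X ω - c) ∂μ :=
  integral_inner_of_condExp_ae_eq hXm.comap_le hGX (stronglyMeasurable_comap_sub_const X c)
    (hG.integrable_inner (hX.sub (memLp_const c))) (hG.integrable one_le_two)

theorem integrable_comp_of_condExp_comap [IsFiniteMeasure μ]
    (hsub : ∀ x y, f y ≥ f x + inner ℝ (h x) (y - x)) (hf : Continuous f) (c : E)
    (hXm : Measurable X) (hX : MemLp X 2 μ) (hG : MemLp G 2 μ)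
    (hGX : μ[G | MeasurableSpace.comap X inferInstance] =ᵐ[μ] fun ω => h (X ω)) :
    Integrable (fun ω => f (X ω)) μ :=
  integrable_comp_of_subgradient_of_le hsub c
    (hf.comp_aestronglyMeasurable hXm.aestronglyMeasurable) (hX.integrable one_le_two)
    (fun ω => sub_le_iff_le_add'.1 (sub_le_inner_of_subgradient hsub (X ω) c))
    ((integrable_const (f c)).add (integrable_inner_sub_of_condExp_comap c hX hG hGX))

theorem perturbed_iterate_descent [IsProbabilityMeasure μ]
    (hsub : ∀ x y, f y ≥ f x + inner ℝ (h x) (y - x)) (hf : Continuous f) (c : E)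
    {Err : Ω → E} {γ : ℝ} (hγ : 0 ≤ γ) (hXm : Measurable X) (hX : MemLp X 2 μ)
    (hErr : MemLp Err 2 μ) (hG : MemLp G 2 μ)
    (hGX : μ[G | MeasurableSpace.comap X inferInstance] =ᵐ[μ] fun ω => h (X ω)) :
    2 * γ * (∫ ω, f (X ω) ∂μ - f c)
      ≤ ∫ ω, ‖X ω - Err ω - c‖ ^ 2 ∂μ - ∫ ω, ‖X ω - Err ω - γ • G ω - c‖ ^ 2 ∂μ
        + γ ^ 2 * ∫ ω, ‖G ω‖ ^ 2 ∂μ + 2 * γ * ∫ ω, inner ℝ (G ω) (Err ω) ∂μ := by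
  have hXc : MemLp (fun ω => X ω - c) 2 μ := hX.sub (memLp_const c)
  have hYc : MemLp (fun ω => X ω - Err ω - c) 2 μ := (hX.sub hErr).sub (memLp_const c)
  have hexpand := integral_norm_sub_smul_sq hYc hG γ
  have hsplit : ∫ ω, inner ℝ (G ω) (X ω - Err ω - c) ∂μ
      = ∫ ω, inner ℝ (G ω) (X ω - c) ∂μ - ∫ ω, inner ℝ (G ω) (Err ω) ∂μ := by
    rw [← integral_sub (hG.integrable_inner hXc) (hG.integrable_inner hErr)]
    congr 1 with ω
    rw [← inner_sub_right, sub_right_comm]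
  have hconvex : ∫ ω, f (X ω) ∂μ - f c ≤ ∫ ω, inner ℝ (G ω) (X ω - c) ∂μ := by
    rw [← integral_inner_sub_of_condExp_comap c hXm hX hG hGX]
    exact integral_comp_sub_le_integral_inner hsub c
      (integrable_comp_of_condExp_comap hsub hf c hXm hX hG hGX)
      (integrable_inner_sub_of_condExp_comap c hX hG hGX)
  have hshift : ∀ ω, X ω - Err ω - γ • G ω - c = (X ω - Err ω - c) - γ • G ω := fun ω => by
    abel
  simp only [hshift, hexpand, hsplit]
  linarith [mul_le_mul_of_nonneg_left hconvex (by positivity : 0 ≤ 2 * γ)]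

end Descent

end MeasureTheory

theorem Real.sqrt_one_sub_mul_add_le {δ a : ℝ} (hδ0 : 0 < δ) (hδ1 : δ ≤ 1) (ha : 0 ≤ a) :
    √(1 - δ) * (a + 2 * √(1 - δ) / δ * a) ≤ 2 * √(1 - δ) / δ * a := by
  have hq0 : 0 ≤ √(1 - δ) := Real.sqrt_nonneg _
  have hq : √(1 - δ) ≤ 1 - δ / 2 := Real.sqrt_le_iff.2 ⟨by linarith, by nlinarith⟩
  have hlhs : √(1 - δ) * (a + 2 * √(1 - δ) / δ * a) = a * √(1 - δ) * (δ + 2 * √(1 - δ)) / δ := by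
    field_simp
  rw [hlhs, div_mul_eq_mul_div, div_le_div_iff_of_pos_right hδ0]
  nlinarith [mul_nonneg ha hq0]

namespace ECSGD

section Algebra

variable {Ω E : Type*} [NormedAddCommGroup E] [Module ℝ E] {C : E → E} {γ δ : ℝ}
  {x g e : ℕ → Ω → E}

theorem norm_error_succ_sq_le (hC : ∀ v, ‖C v - v‖ ^ 2 ≤ (1 - δ) * ‖v‖ ^ 2)
    (herr : ∀ t ω, e (t + 1) ω = (γ • g t ω + e t ω) - C (γ • g t ω + e t ω)) (t : ℕ) (ω : Ω) :
    ‖e (t + 1) ω‖ ^ 2 ≤ (1 - δ) * ‖γ • g t ω + e t ω‖ ^ 2 := by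
  rw [herr, norm_sub_rev]
  exact hC _

theorem error_succ_eq (hstep : ∀ t ω, x (t + 1) ω = x t ω - C (γ • g t ω + e t ω))
    (herr : ∀ t ω, e (t + 1) ω = (γ • g t ω + e t ω) - C (γ • g t ω + e t ω)) (t : ℕ) (ω : Ω) :
    e (t + 1) ω = γ • g t ω + e t ω - (x t ω - x (t + 1) ω) := by
  rw [herr, hstep, sub_sub_cancel]

theorem virtual_succ (hstep : ∀ t ω, x (t + 1) ω = x t ω - C (γ • g t ω + e t ω))
    (herr : ∀ t ω, e (t + 1) ω = (γ • g t ω + e t ω) - C (γ • g t ω + e t ω)) (t : ℕ) (ω : Ω) :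
    x (t + 1) ω - e (t + 1) ω = x t ω - e t ω - γ • g t ω := by
  rw [error_succ_eq hstep herr]
  abel

end Algebra

section Moments

variable {Ω E : Type*} [MeasurableSpace Ω] {μ : Measure Ω} [NormedAddCommGroup E]
  [InnerProductSpace ℝ E] {C : E → E} {γ δ : ℝ} {x g e : ℕ → Ω → E}

theorem memLp_error (hδ0 : 0 ≤ δ) (hC : ∀ v, ‖C v - v‖ ^ 2 ≤ (1 - δ) * ‖v‖ ^ 2)
    (he0 : ∀ ω, e 0 ω = 0)
    (hstep : ∀ t ω, x (t + 1) ω = x t ω - C (γ • g t ω + e t ω))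
    (herr : ∀ t ω, e (t + 1) ω = (γ • g t ω + e t ω) - C (γ • g t ω + e t ω))
    (hx : ∀ t, AEStronglyMeasurable (x t) μ) (hg : ∀ t, MemLp (g t) 2 μ) :
    ∀ t, MemLp (e t) 2 μ
  | 0 => by
    rw [show e 0 = 0 from funext he0]
    exact MemLp.zero
  | t + 1 => by
    have hp : MemLp (fun ω => γ • g t ω + e t ω) 2 μ :=
      ((hg t).const_smul γ).add (memLp_error hδ0 hC he0 hstep herr hx hg t)
    refine hp.of_le ?_ (ae_of_all _ fun ω => ?_)
    · rw [show e (t + 1) = fun ω => γ • g t ω + e t ω - (x t ω - x (t + 1) ω) from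
        funext (error_succ_eq hstep herr t)]
      exact hp.1.sub ((hx t).sub (hx (t + 1)))
    · have := norm_error_succ_sq_le hC herr t ω
      exact pow_le_pow_iff_left₀ (norm_nonneg _) (norm_nonneg _) two_ne_zero |>.1 (by nlinarith)

theorem memLp_iterate [IsFiniteMeasure μ] {x0 : E} (hx0 : ∀ ω, x 0 ω = x0)
    (hstep : ∀ t ω, x (t + 1) ω = x t ω - C (γ • g t ω + e t ω))
    (herr : ∀ t ω, e (t + 1) ω = (γ • g t ω + e t ω) - C (γ • g t ω + e t ω))
    (he : ∀ t, MemLp (e t) 2 μ) (hg : ∀ t, MemLp (g t) 2 μ) :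
    ∀ t, MemLp (x t) 2 μ
  | 0 => by
    rw [show x 0 = fun _ => x0 from funext hx0]
    exact memLp_const x0
  | t + 1 => by
    rw [show x (t + 1) = fun ω => x t ω - e t ω - γ • g t ω + e (t + 1) ω from
      funext fun ω => by rw [← virtual_succ hstep herr]; abel]
    exact (((memLp_iterate hx0 hstep herr he hg t).sub (he t)).sub ((hg t).const_smul γ)).add
      (he (t + 1))

theorem sqrt_integral_norm_sq_error_le (hδ0 : 0 < δ) (hδ1 : δ ≤ 1)
    (hγ : 0 ≤ γ) (hC : ∀ v, ‖C v - v‖ ^ 2 ≤ (1 - δ) * ‖v‖ ^ 2) (he0 : ∀ ω, e 0 ω = 0)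
    (herr : ∀ t ω, e (t + 1) ω = (γ • g t ω + e t ω) - C (γ • g t ω + e t ω))
    (he : ∀ t, MemLp (e t) 2 μ) (hg : ∀ t, MemLp (g t) 2 μ) {σ : ℝ}
    (hgσ : ∀ t, √(∫ ω, ‖g t ω‖ ^ 2 ∂μ) ≤ σ) :
    ∀ t, √(∫ ω, ‖e t ω‖ ^ 2 ∂μ) ≤ 2 * √(1 - δ) / δ * (γ * σ) := by
  have hσ : 0 ≤ σ := (Real.sqrt_nonneg _).trans (hgσ 0)
  intro t
  induction t with
  | zero => simp [he0]; positivity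
  | succ t ih =>
    calc √(∫ ω, ‖e (t + 1) ω‖ ^ 2 ∂μ) ≤ √((1 - δ) * ∫ ω, ‖γ • g t ω + e t ω‖ ^ 2 ∂μ) := by
          have hp : MemLp (fun ω => γ • g t ω + e t ω) 2 μ := ((hg t).const_smul γ).add (he t)
          rw [← integral_const_mul]
          exact Real.sqrt_le_sqrt <| integral_mono_of_nonneg (ae_of_all _ fun ω => by positivity)
            (hp.integrable_norm_sq.const_mul _) (ae_of_all _ (norm_error_succ_sq_le hC herr t))
      _ = √(1 - δ) * √(∫ ω, ‖γ • g t ω + e t ω‖ ^ 2 ∂μ) := Real.sqrt_mul (by linarith) _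
      _ ≤ √(1 - δ) * (γ * σ + 2 * √(1 - δ) / δ * (γ * σ)) := by
          gcongr
          refine (sqrt_integral_norm_add_sq_le (u := fun ω => γ • g t ω)
            ((hg t).const_smul γ) (he t)).trans
            (add_le_add ?_ ih)
          rw [sqrt_integral_norm_smul_sq, abs_of_nonneg hγ]
          exact mul_le_mul_of_nonneg_left (hgσ t) hγ
      _ ≤ 2 * √(1 - δ) / δ * (γ * σ) :=
          Real.sqrt_one_sub_mul_add_le hδ0 hδ1 (mul_nonneg hγ hσ)

end Moments

end ECSGD

/-- Theorem 4 (non-smooth convex convergence of EC-SGD): for convex `f` with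
minimizer `x⋆`, subgradients `h` (`f y ≥ f x + ⟨h x, y - x⟩`, `‖h x‖ ≤ σ`), a
`δ`-approximate compressor, and stochastic subgradients with
`E[g t | x t] = h (x t)` and `E‖g t‖² ≤ σ²`, the averaged EC-SGD iterate
`x̄_T = (1/(T+1)) ∑_{t ≤ T} x t` satisfies
`E[f x̄_T] - f x⋆ ≤ ‖x₀ - x⋆‖²/(2γ(T+1)) + γσ²(1/2 + 2√(1-δ)/δ)`. -/
theorem ecsgd_nonsmooth_convex_convergence
    {d : ℕ} {Ω : Type*} [MeasurableSpace Ω] (μ : Measure Ω)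
    [IsProbabilityMeasure μ]
    (f : EuclideanSpace ℝ (Fin d) → ℝ)
    (hconv : ConvexOn ℝ Set.univ f)
    (xstar : EuclideanSpace ℝ (Fin d))
    (h : EuclideanSpace ℝ (Fin d) → EuclideanSpace ℝ (Fin d))
    (hsubgrad : ∀ x y, f y ≥ f x + (inner ℝ (h x) (y - x) : ℝ))
    (δ : ℝ) (hδ0 : 0 < δ) (hδ1 : δ ≤ 1)
    (C : EuclideanSpace ℝ (Fin d) → EuclideanSpace ℝ (Fin d))
    (hC : ∀ v, ‖C v - v‖ ^ 2 ≤ (1 - δ) * ‖v‖ ^ 2)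
    (σ : ℝ)
    (γ : ℝ) (hγ : 0 < γ) (T : ℕ)
    (x g e : ℕ → Ω → EuclideanSpace ℝ (Fin d))
    (x0 : EuclideanSpace ℝ (Fin d)) (hx0 : ∀ ω, x 0 ω = x0)
    (he0 : ∀ ω, e 0 ω = 0)
    (hstep : ∀ t ω, x (t + 1) ω = x t ω - C (γ • g t ω + e t ω))
    (herr : ∀ t ω, e (t + 1) ω = (γ • g t ω + e t ω) - C (γ • g t ω + e t ω))
    (hmeas : ∀ t, Measurable (x t)) (hgmeas : ∀ t, Measurable (g t))
    (hgint2 : ∀ t, Integrable (fun ω => ‖g t ω‖ ^ 2) μ)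
    (hunbiased : ∀ t,
      μ[g t | MeasurableSpace.comap (x t) (by infer_instance)]
        =ᵐ[μ] fun ω => h (x t ω))
    (hvar : ∀ t, ∫ ω, ‖g t ω‖ ^ 2 ∂μ ≤ σ ^ 2) :
    (∫ ω, f ((1 / ((T : ℝ) + 1)) • ∑ t ∈ Finset.range (T + 1), x t ω) ∂μ)
        - f xstar
      ≤ ‖x0 - xstar‖ ^ 2 / (2 * γ * (T + 1))
        + γ * σ ^ 2 * (1 / 2 + 2 * Real.sqrt (1 - δ) / δ) := by
  have hg : ∀ t, MemLp (g t) 2 μ := fun t =>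
    (memLp_two_iff_integrable_sq_norm (hgmeas t).aestronglyMeasurable).2 (hgint2 t)
  have he := ECSGD.memLp_error hδ0.le hC he0 hstep herr (fun t => (hmeas t).aestronglyMeasurable) hg
  have hx := ECSGD.memLp_iterate hx0 hstep herr he hg
  have hg_le : ∀ t, √(∫ ω, ‖g t ω‖ ^ 2 ∂μ) ≤ |σ| := fun t =>
    Real.sqrt_sq_eq_abs σ ▸ Real.sqrt_le_sqrt (hvar t)
  have he_le := ECSGD.sqrt_integral_norm_sq_error_le hδ0 hδ1 hγ.le hC he0 herr he hg hg_le
  have hf : Continuous f := continuousOn_univ.1 (hconv.continuousOn isOpen_univ)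
  have hfx t := integrable_comp_of_condExp_comap hsubgrad hf xstar (hmeas t) (hx t) (hg t)
    (hunbiased t)
  set R := fun t => ∫ ω, ‖x t ω - e t ω - xstar‖ ^ 2 ∂μ
  have hdescent : ∀ t, 2 * γ * (∫ ω, f (x t ω) ∂μ - f xstar)
      ≤ R t - R (t + 1) + (γ ^ 2 * σ ^ 2 + 2 * γ * (|σ| * (2 * √(1 - δ) / δ * (γ * |σ|)))) := by
    intro t
    have hdesc := perturbed_iterate_descent hsubgrad hf xstar hγ.le (hmeas t) (hx t) (he t) (hg t)
      (hunbiased t)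
    have hcs := (integral_inner_le_sqrt_mul_sqrt (hg t) (he t)).trans
      (mul_le_mul (hg_le t) (he_le t) (Real.sqrt_nonneg _) (abs_nonneg σ))
    simp only [← ECSGD.virtual_succ hstep herr] at hdesc
    linarith [mul_le_mul_of_nonneg_left (hvar t) (sq_nonneg γ),
      mul_le_mul_of_nonneg_left hcs (by positivity : 0 ≤ 2 * γ)]
  have hjensen := hconv.integral_comp_uniform_average_le (Finset.nonempty_range_add_one (n := T))
    (fun t _ => hfx t) (hconv.integrable_comp_uniform_average hf hsubgrad xstar
      Finset.nonempty_range_add_one (fun t _ => (hx t).integrable one_le_two) (fun t _ => hfx t))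
  rw [Finset.card_range, Nat.cast_add_one] at hjensen
  have hR0 : R 0 = ‖x0 - xstar‖ ^ 2 := by simp [R, hx0, he0]
  calc _ ≤ 1 / ((T : ℝ) + 1) * ∑ t ∈ Finset.range (T + 1), ∫ ω, f (x t ω) ∂μ - f xstar := by
        linarith
    _ ≤ _ := average_sub_le_of_two_mul_sub_le hγ T (integral_nonneg fun _ => sq_nonneg _) hdescent
    _ = _ := by
        rw [hR0, ← sq_abs σ]
        field_simp
end

section
/- The scaled sign operator C(v) := (‖v‖₁/d)·sign(v) on ℝᵈ satisfies ‖C(v) - v‖² = ‖v‖² - ‖v‖₁²/d, i.e., C is a φ(v)-approximate compressor with φ(v) = ‖v‖₁²/(d‖v‖²) for every nonzero v ∈ ℝᵈ. -/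
/-! Write `C = c • s` with `c = ‖v‖₁ / d` and `s = sign v`. Expanding the square,
`‖c • s - v‖² = c² ‖s‖² - 2 c ⟪s, v⟫ + ‖v‖²`, and `⟪s, v⟫ = ‖v‖₁`, while `‖s‖² = d` because no
coordinate of `v` vanishes. With `c = ‖v‖₁ / d` the first two terms combine to `-‖v‖₁² / d`. -/

theorem Real.mul_sign_self (x : ℝ) : x * Real.sign x = |x| := by
  rcases lt_trichotomy x 0 with hx | rfl | hx
  · rw [Real.sign_of_neg hx, abs_of_neg hx]; ring
  · simp
  · rw [Real.sign_of_pos hx, abs_of_pos hx]; ring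

theorem Real.sign_sq_of_ne_zero {x : ℝ} (hx : x ≠ 0) : Real.sign x ^ 2 = 1 := by
  rcases Real.sign_apply_eq_of_ne_zero x hx with h | h <;> simp [h]

open RealInnerProductSpace

namespace EuclideanSpace

variable {ι : Type*}

noncomputable def signVec (v : EuclideanSpace ℝ ι) : EuclideanSpace ℝ ι :=
  WithLp.toLp 2 fun i => Real.sign (v i)

@[simp]
theorem signVec_apply (v : EuclideanSpace ℝ ι) (i : ι) : signVec v i = Real.sign (v i) := rfl

variable [Fintype ι]

theorem inner_signVec_self (v : EuclideanSpace ℝ ι) : ⟪signVec v, v⟫ = ∑ i, |v i| := by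
  simp [PiLp.inner_apply, Real.mul_sign_self]

theorem norm_signVec_sq {v : EuclideanSpace ℝ ι} (hv : ∀ i, v i ≠ 0) :
    ‖signVec v‖ ^ 2 = Fintype.card ι := by
  simp [EuclideanSpace.norm_sq_eq, Real.sign_sq_of_ne_zero (hv _)]

theorem norm_smul_signVec_sub_sq {v : EuclideanSpace ℝ ι} (hv : ∀ i, v i ≠ 0) (c : ℝ) :
    ‖c • signVec v - v‖ ^ 2 = Fintype.card ι * c ^ 2 - 2 * c * ∑ i, |v i| + ‖v‖ ^ 2 := by
  rw [norm_sub_sq_real, norm_smul, mul_pow, norm_signVec_sq hv, real_inner_smul_left,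
    inner_signVec_self, Real.norm_eq_abs, sq_abs]
  ring

end EuclideanSpace

theorem mul_div_sq_sub_two_mul_div_mul (n a : ℝ) :
    n * (a / n) ^ 2 - 2 * (a / n) * a = -(a ^ 2 / n) := by
  rcases eq_or_ne n 0 with rfl | hn
  · simp
  · field_simp; ring

theorem sub_div_eq_one_sub_div_mul_mul {x a : ℝ} (b : ℝ) (h : x = 0 → a = 0) :
    x - a / b = (1 - a / (b * x)) * x := by
  rcases eq_or_ne x 0 with rfl | hx
  · simp [h rfl]
  · field_simp

open EuclideanSpace in
theorem scaled_sign_is_compressor_general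
    {d : ℕ} (v : EuclideanSpace ℝ (Fin d))
    (hv : ∀ i, v i ≠ 0)
    (C : EuclideanSpace ℝ (Fin d))
    (hC : ∀ i, C i = ((∑ j, |v j|) / d) * Real.sign (v i)) :
    ‖C - v‖ ^ 2 = ‖v‖ ^ 2 - (∑ j, |v j|) ^ 2 / d ∧
    ‖C - v‖ ^ 2 ≤ (1 - (∑ j, |v j|) ^ 2 / (d * ‖v‖ ^ 2)) * ‖v‖ ^ 2 := by
  have hC_eq : C = ((∑ j, |v j|) / d) • signVec v := by ext i; simp [hC]
  have hnorm_sq : ‖C - v‖ ^ 2 = ‖v‖ ^ 2 - (∑ j, |v j|) ^ 2 / d := by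
    rw [hC_eq, norm_smul_signVec_sub_sq hv, Fintype.card_fin]
    linarith [mul_div_sq_sub_two_mul_div_mul d (∑ j, |v j|)]
  refine ⟨hnorm_sq, hnorm_sq.trans_le (sub_div_eq_one_sub_div_mul_mul _ fun h => ?_).le⟩
  simp [norm_eq_zero.mp (pow_eq_zero_iff two_ne_zero |>.mp h)]

/-- The scaled sign operator `C v = (‖v‖₁/d) • sign v` on `ℝᵈ` satisfies, for
every `v` with all coordinates nonzero,
`‖C v - v‖² = ‖v‖² - ‖v‖₁²/d`; i.e. `C` is a `φ(v)`-approximate compressor with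
`φ(v) = ‖v‖₁²/(d‖v‖²)`. -/
theorem scaled_sign_is_compressor
    {d : ℕ} (hd : 0 < d) (v : EuclideanSpace ℝ (Fin d))
    (hv : ∀ i, v i ≠ 0)
    (C : EuclideanSpace ℝ (Fin d))
    (hC : ∀ i, C i = ((∑ j, |v j|) / d) * Real.sign (v i)) :
    ‖C - v‖ ^ 2 = ‖v‖ ^ 2 - (∑ j, |v j|) ^ 2 / d ∧
    ‖C - v‖ ^ 2 ≤ (1 - (∑ j, |v j|) ^ 2 / (d * ‖v‖ ^ 2)) * ‖v‖ ^ 2 :=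
  scaled_sign_is_compressor_general v hv C hC
end

section
/- Let f: ℝᵈ → ℝ be L-smooth and bounded below by f*, and suppose E[g_t|x_t] = ∇f(x_t) and E‖g_t‖² ≤ σ². Then SGD with step-size γ = 1/√(T+1) satisfies min_{t∈[T]} E‖∇f(x_t)‖² ≤ (2(f(x₀)-f*) + Lσ²)/(2√(T+1)). -/
/-! Smoothness gives the descent inequality `f (x - γ • v) ≤ f x - γ ⟪∇f x, v⟫ + L γ² ‖v‖² / 2`.
Taking expectations with `v = g t`, unbiasedness turns `E ⟪∇f (x t), g t⟫` into `E ‖∇f (x t)‖²`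
(in `L²`, `g t - E[g t | x t]` is orthogonal to functions of `x t`), so each step decreases
`E f (x t)` by `γ E ‖∇f (x t)‖²` up to `L γ² σ² / 2`. Telescoping and `f ≥ f⋆` bound the sum of
the `T + 1` expected squared gradient norms, and the smallest one is at most their average,
which for `γ = 1/√(T+1)` is the claimed bound. -/

open MeasureTheory RealInnerProductSpace

section Smooth

variable {E : Type*} [NormedAddCommGroup E] [InnerProductSpace ℝ E]

def LSmoothWith (L : ℝ) (f : E → ℝ) (f' : E → E) : Prop :=
  ∀ x y, |f y - (f x + ⟪f' x, y - x⟫)| ≤ L / 2 * ‖y - x‖ ^ 2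

namespace LSmoothWith

variable {L : ℝ} {f : E → ℝ} {f' : E → E}

theorem abs_sub_le (hf : LSmoothWith L f f') (x y : E) :
    |f y - f x| ≤ ‖f' x‖ * ‖y - x‖ + L / 2 * ‖y - x‖ ^ 2 := by
  have h := hf x y
  have hinner := abs_real_inner_le_norm (f' x) (y - x)
  calc |f y - f x| = |(f y - (f x + ⟪f' x, y - x⟫)) + ⟪f' x, y - x⟫| := by ring_nf
    _ ≤ |f y - (f x + ⟪f' x, y - x⟫)| + |⟪f' x, y - x⟫| := abs_add_le _ _
    _ ≤ _ := by linarith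

theorem continuous (hf : LSmoothWith L f f') : Continuous f := by
  refine continuous_iff_continuousAt.2 fun x => tendsto_iff_norm_sub_tendsto_zero.2 ?_
  refine squeeze_zero (fun _ => norm_nonneg _) (fun y => hf.abs_sub_le x y) ?_
  have hcont : Continuous fun y => ‖f' x‖ * ‖y - x‖ + L / 2 * ‖y - x‖ ^ 2 := by fun_prop
  simpa using hcont.tendsto x

theorem le_sub_inner_add (hf : LSmoothWith L f f') (x v : E) (γ : ℝ) :
    f (x - γ • v) ≤ f x - γ * ⟪f' x, v⟫ + L * γ ^ 2 / 2 * ‖v‖ ^ 2 := by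
  have h := (abs_le.1 (hf x (x - γ • v))).2
  rw [sub_sub_cancel_left, inner_neg_right, real_inner_smul_right, norm_neg, norm_smul,
    Real.norm_eq_abs, mul_pow, sq_abs] at h
  linarith

variable {Ω : Type*} [MeasurableSpace Ω] {μ : Measure Ω} [IsFiniteMeasure μ]

theorem integrable_comp (hf : LSmoothWith L f f') {X : Ω → E} (hX : MemLp X 2 μ) :
    Integrable (fun ω => f (X ω)) μ := by
  have hnorm : Integrable (fun ω => ‖X ω‖) μ := (hX.integrable one_le_two).norm
  have hnorm_sq : Integrable (fun ω => ‖X ω‖ ^ 2) μ := hX.integrable_norm_pow two_ne_zero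
  refine Integrable.mono' (((hnorm.const_mul ‖f' 0‖).add (hnorm_sq.const_mul (L / 2))).add
      (integrable_const |f 0|))
    (hf.continuous.comp_aestronglyMeasurable hX.1)
    (Filter.Eventually.of_forall fun ω => ?_)
  have h := hf.abs_sub_le 0 (X ω)
  rw [sub_zero] at h
  have := abs_sub_abs_le_abs_sub (f (X ω)) (f 0)
  simp only [Real.norm_eq_abs, Pi.add_apply]
  linarith

theorem integral_comp_sub_smul_le (hf : LSmoothWith L f f')
    {X V : Ω → E} (hX : MemLp X 2 μ) (hV : MemLp V 2 μ)
    (hinner : Integrable (fun ω => ⟪f' (X ω), V ω⟫) μ) (γ : ℝ) :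
    ∫ ω, f (X ω - γ • V ω) ∂μ ≤
      ∫ ω, f (X ω) ∂μ - γ * ∫ ω, ⟪f' (X ω), V ω⟫ ∂μ + L * γ ^ 2 / 2 * ∫ ω, ‖V ω‖ ^ 2 ∂μ := by
  have hfX := hf.integrable_comp hX
  have hV2 : Integrable (fun ω => ‖V ω‖ ^ 2) μ := hV.integrable_norm_pow two_ne_zero
  have hlin : Integrable (fun ω => f (X ω) - γ * ⟪f' (X ω), V ω⟫) μ := hfX.sub (hinner.const_mul γ)
  calc ∫ ω, f (X ω - γ • V ω) ∂μ
      ≤ ∫ ω, (f (X ω) - γ * ⟪f' (X ω), V ω⟫ + L * γ ^ 2 / 2 * ‖V ω‖ ^ 2) ∂μ :=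
        integral_mono (hf.integrable_comp (hX.sub (hV.const_smul γ)))
          (hlin.add (hV2.const_mul _))
          fun ω => hf.le_sub_inner_add (X ω) (V ω) γ
    _ = _ := by
        rw [integral_add hlin (hV2.const_mul _),
          integral_sub hfX (hinner.const_mul γ), integral_const_mul, integral_const_mul]

end LSmoothWith

end Smooth

section CondExp

variable {Ω E : Type*} {m m0 : MeasurableSpace Ω} {μ : Measure Ω} [IsFiniteMeasure μ]
  [NormedAddCommGroup E] [InnerProductSpace ℝ E] [CompleteSpace E] {g h : Ω → E}

theorem memLp_two_of_condExp_ae_eq (hm : m ≤ m0) (hg : MemLp g 2 μ) (hgh : μ[g|m] =ᵐ[μ] h) :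
    MemLp h 2 μ :=
  (Lp.memLp (condExpL2 E ℝ hm hg.toLp : Lp E 2 μ)).ae_eq
    ((hg.condExpL2_ae_eq_condExp (𝕜 := ℝ) hm).trans hgh)

theorem integrable_inner_of_condExp_ae_eq (hm : m ≤ m0) (hg : MemLp g 2 μ)
    (hgh : μ[g|m] =ᵐ[μ] h) : Integrable (fun ω => ⟪h ω, g ω⟫) μ := by
  have hh := memLp_two_of_condExp_ae_eq hm hg hgh
  refine (L2.integrable_inner (𝕜 := ℝ) hh.toLp hg.toLp).congr ?_
  filter_upwards [hh.coeFn_toLp, hg.coeFn_toLp] with ω h1 h2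
  rw [h1, h2]

theorem integral_inner_eq_integral_norm_sq_of_condExp_ae_eq (hm : m ≤ m0) (hg : MemLp g 2 μ)
    (hgh : μ[g|m] =ᵐ[μ] h) : ∫ ω, ⟪h ω, g ω⟫ ∂μ = ∫ ω, ‖h ω‖ ^ 2 ∂μ := by
  set H : Lp E 2 μ := (condExpL2 E ℝ hm hg.toLp : Lp E 2 μ)
  have hH : h =ᵐ[μ] H := (hg.condExpL2_ae_eq_condExp (𝕜 := ℝ) hm |>.trans hgh).symm
  calc ∫ ω, ⟪h ω, g ω⟫ ∂μ = ⟪H, hg.toLp⟫ := by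
        rw [L2.inner_def]
        refine integral_congr_ae ?_
        filter_upwards [hH, hg.coeFn_toLp] with ω h1 h2
        rw [h1, h2]
    _ = ⟪H, H⟫ := by
        rw [real_inner_comm,
          inner_condExpL2_eq_inner_fun hm _ _ (aestronglyMeasurable_condExpL2 hm _)]
    _ = ∫ ω, ‖h ω‖ ^ 2 ∂μ := by
        rw [L2.inner_def]
        refine integral_congr_ae ?_
        filter_upwards [hH] with ω h1
        rw [h1, real_inner_self_eq_norm_sq]

end CondExp

theorem exists_lt_le_of_le_sub_mul_add {F G : ℕ → ℝ} {γ c m : ℝ} {N : ℕ} (hN : 0 < N)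
    (hγ : 0 < γ) (hF : ∀ t, F (t + 1) ≤ F t - γ * G t + c) (hm : m ≤ F N) :
    ∃ t < N, G t ≤ (F 0 - m + N * c) / (γ * N) := by
  have hsum : γ * ∑ t ∈ Finset.range N, G t ≤ F 0 - m + N * c := by
    have htel := Finset.sum_range_sub F N
    have hle : ∑ t ∈ Finset.range N, (F (t + 1) - F t) ≤ ∑ t ∈ Finset.range N, (c - γ * G t) :=
      Finset.sum_le_sum fun t _ => by linarith [hF t]
    rw [htel, Finset.sum_sub_distrib, Finset.sum_const, Finset.card_range, nsmul_eq_mul,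
      ← Finset.mul_sum] at hle
    linarith
  obtain ⟨t, ht, hGt⟩ := Finset.exists_le_of_sum_le (Finset.nonempty_range_iff.2 hN.ne')
    (f := G) (g := fun _ => (F 0 - m + N * c) / (γ * N)) (by
      rw [Finset.sum_const, Finset.card_range, nsmul_eq_mul, mul_div_assoc',
        le_div_iff₀ (by positivity)]
      linarith [mul_le_mul_of_nonneg_left hsum (Nat.cast_nonneg (α := ℝ) N)])
  exact ⟨t, Finset.mem_range.1 ht, hGt⟩

/-- Non-convex convergence of SGD: if `f` is `L`-smooth with gradient `f'`,
bounded below by `f⋆`, the stochastic gradients are unbiased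
(`E[g t | x t] = ∇f (x t)`) with `E‖g t‖² ≤ σ²`, then SGD with step-size
`γ = 1/√(T+1)` satisfies
`min_{t ≤ T} E‖∇f (x t)‖² ≤ (2(f x₀ - f⋆) + Lσ²)/(2√(T+1))`. -/
theorem sgd_nonconvex_convergence
    {d : ℕ} {Ω : Type*} [MeasurableSpace Ω] (μ : Measure Ω)
    [IsProbabilityMeasure μ]
    (f : EuclideanSpace ℝ (Fin d) → ℝ) (f' : EuclideanSpace ℝ (Fin d) → EuclideanSpace ℝ (Fin d))
    (L : ℝ) (hL : 0 < L)
    (hsmooth : ∀ x y, |f y - (f x + (inner ℝ (f' x) (y - x) : ℝ))| ≤ L / 2 * ‖y - x‖ ^ 2)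
    (fstar : ℝ) (hbelow : ∀ x, fstar ≤ f x)
    (σ : ℝ)
    (T : ℕ) (γ : ℝ) (hγ : γ = 1 / Real.sqrt (T + 1))
    (x g : ℕ → Ω → EuclideanSpace ℝ (Fin d))
    (x0 : EuclideanSpace ℝ (Fin d)) (hx0 : ∀ ω, x 0 ω = x0)
    (hstep : ∀ t ω, x (t + 1) ω = x t ω - γ • g t ω)
    (hmeas : ∀ t, Measurable (x t))
    (hgint : ∀ t, Integrable (g t) μ)
    (hgint2 : ∀ t, Integrable (fun ω => ‖g t ω‖ ^ 2) μ)
    (hunbiased : ∀ t,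
      μ[g t | MeasurableSpace.comap (x t) (by infer_instance)]
        =ᵐ[μ] fun ω => f' (x t ω))
    (hvar : ∀ t, ∫ ω, ‖g t ω‖ ^ 2 ∂μ ≤ σ ^ 2) :
    ∃ t ≤ T, ∫ ω, ‖f' (x t ω)‖ ^ 2 ∂μ
      ≤ (2 * (f x0 - fstar) + L * σ ^ 2) / (2 * Real.sqrt (T + 1)) := by
  have hf : LSmoothWith L f f' := hsmooth
  have hg2 (t : ℕ) : MemLp (g t) 2 μ :=
    (memLp_two_iff_integrable_sq_norm (hgint t).1).2 (hgint2 t)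
  have hx2 (t : ℕ) : MemLp (x t) 2 μ := by
    induction t with
    | zero => simpa [funext hx0] using memLp_const x0
    | succ t ih => rw [funext (hstep t)]; exact ih.sub ((hg2 t).const_smul γ)
  have hdescent (t : ℕ) : ∫ ω, f (x (t + 1) ω) ∂μ ≤
      ∫ ω, f (x t ω) ∂μ - γ * ∫ ω, ‖f' (x t ω)‖ ^ 2 ∂μ + L * γ ^ 2 / 2 * σ ^ 2 := by
    have hm := (hmeas t).comap_le
    have h := hf.integral_comp_sub_smul_le (hx2 t) (hg2 t)
      (integrable_inner_of_condExp_ae_eq hm (hg2 t) (hunbiased t)) γ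
    rw [integral_inner_eq_integral_norm_sq_of_condExp_ae_eq hm (hg2 t) (hunbiased t)] at h
    simp only [← hstep] at h
    linarith [mul_le_mul_of_nonneg_left (hvar t) (by positivity : 0 ≤ L * γ ^ 2 / 2)]
  have hlow : fstar ≤ ∫ ω, f (x (T + 1) ω) ∂μ := by
    simpa using integral_mono (integrable_const fstar)
      (hf.integrable_comp (hx2 (T + 1))) fun ω => hbelow _
  have hγpos : 0 < γ := by rw [hγ]; positivity
  obtain ⟨t, ht, hle⟩ := exists_lt_le_of_le_sub_mul_add (F := fun t => ∫ ω, f (x t ω) ∂μ)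
    (G := fun t => ∫ ω, ‖f' (x t ω)‖ ^ 2 ∂μ) T.succ_pos hγpos hdescent hlow
  refine ⟨t, Nat.lt_succ_iff.1 ht, hle.trans_eq ?_⟩
  have hs2 : Real.sqrt (T + 1) ^ 2 = T + 1 := Real.sq_sqrt (by positivity)
  simp only [hx0, integral_const, probReal_univ, one_smul, hγ]
  push_cast
  field_simp
  rw [hs2]
  ring
end
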